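/- Let k ∈ ℕ, let S_1 and S_m be binary strings of length ℓ ≥ 1, and let c = (4k+12)ℓ + 4k+8 = |γ(S_1)| + 2k+4. Then for every factor X of length c of the string φ(S_1)·1^{2k+4}·φ(S_1) and every factor Y of length c of the string (γ(S_m)·1^{2k+4})^2, the Hamming distance satisfies Ham(X, Y) ≥ 2k+1. -/

import Mathlib

/-- Hamming distance between two (equal-length) strings:
the number of positions where they differ. -/
def ham : List Bool → List Bool → ℕ
  | x :: U, y :: V => (if x = y then 0 else 1) + ham U V
  | _, _ => 0

/-- The morphism `φ`: `φ(0) = 0^{2k+4} 1010 0^{2k+4}` and `φ(1) = 0^{2k+4} 1011 0^{2k+4}`,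
with `0 ↦ false`, `1 ↦ true`. -/
def phi (k : ℕ) (S : List Bool) : List Bool :=
  S.flatMap fun x =>
    List.replicate (2 * k + 4) false ++ [true, false, true, x] ++
      List.replicate (2 * k + 4) false

/-- `γ(S) = 1^{2k+4} · φ(S)`. -/
def gamma (k : ℕ) (S : List Bool) : List Bool :=
  List.replicate (2 * k + 4) true ++ phi k S

/-!
Write `m = 2k+4`. Since `γ(Sₘ) 1^m = 1^m φ(Sₘ) 1^m` is a rotation of `1^{2m} φ(Sₘ)`, so is every
factor of its square of length `c = |γ(Sₘ) 1^m|`, in particular `Y`. Rotating `X` along with `Y`,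
`Ham(X, Y)` is at least the number of zeros in a cyclic window of length `2m` of `X`.

The word `φ(S₁)` starts with `0^m`, and each of its factors of length at most `2m` contains at
most three ones, since consecutive cores `101x` are separated by `0^{2m}`. Hence a window of length
`2m` of `φ(S₁) 1^m φ(S₁)` has at least `m - 3` zeros: outside the middle run it is either a factor
of `φ(S₁)` of length at least `m`, or a suffix of `φ(S₁)` followed by a prefix of length at most
`m`. A window wrapping around `X` is a suffix of `X` followed by a prefix of `X`; either both lie
in copies of `φ(S₁)`, giving `2m - 6 ≥ m - 3` zeros, or one of them contains all of `X` before or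
after the middle run, a factor of `φ(S₁)` of length at least `m`.
-/

theorem List.count_take_drop_append {α : Type*} [BEq α] (a : α) (L₁ L₂ : List α) (i j : ℕ) :
    (((L₁ ++ L₂).drop i).take j).count a =
      ((L₁.drop i).take j).count a +
        ((L₂.drop (i - L₁.length)).take (j - (L₁.length - i))).count a := by
  simp [List.drop_append, List.take_append, List.count_append]

theorem List.IsInfix.exists_eq_take_drop {α : Type*} {l₁ l₂ : List α} (h : l₁ <:+: l₂) :
    ∃ d, d + l₁.length ≤ l₂.length ∧ l₁ = (l₂.drop d).take l₁.length := by
  obtain ⟨s, t, rfl⟩ := h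
  exact ⟨s.length, by simp, by simp⟩

theorem List.isRotated_of_infix_append_self {α : Type*} {Y U : List α} (h : Y <:+: U ++ U)
    (hlen : Y.length = U.length) : Y ~r U := by
  rcases List.infix_append_iff.mp h with h | h | ⟨l₁, l₂, rfl, h₁, ⟨t, rfl⟩⟩
  · rw [h.eq_of_length hlen]
  · rw [h.eq_of_length hlen]
  · have ht : l₁ = t := by
      rw [List.length_append, List.length_append] at hlen
      rw [List.suffix_iff_eq_drop.mp h₁, List.length_append, List.drop_left' (by omega)]
    rw [ht]
    exact List.isRotated_append

theorem List.isRotated_replicate_append_of_infix {α : Type*} (a : α) {m : ℕ} {G Y : List α}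
    (hY : Y <:+: (replicate m a ++ G ++ replicate m a) ++ (replicate m a ++ G ++ replicate m a))
    (hlen : Y.length = G.length + 2 * m) : Y ~r replicate (2 * m) a ++ G := by
  have hYU : Y ~r replicate m a ++ G ++ replicate m a :=
    isRotated_of_infix_append_self hY (by simp only [length_append, length_replicate]; omega)
  have hU : replicate m a ++ G ++ replicate m a ~r G ++ replicate (2 * m) a := by
    simpa only [append_assoc, two_mul, replicate_add] using
      isRotated_append (l := replicate m a) (l' := G ++ replicate m a)
  exact hYU.trans (hU.trans isRotated_append)

theorem ham_eq_ham_take_add_ham_drop (X Y : List Bool) (n : ℕ) :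
    ham X Y = ham (X.take n) (Y.take n) + ham (X.drop n) (Y.drop n) := by
  induction n generalizing X Y with
  | zero => simp [ham]
  | succ n ih =>
    match X, Y with
    | [], _ => simp [ham]
    | _ :: _, [] => simp [ham]
    | x :: X, y :: Y => simp only [ham, List.take_succ_cons, List.drop_succ_cons, ih X Y]; omega

theorem ham_append {X₁ Y₁ : List Bool} (h : X₁.length = Y₁.length) (X₂ Y₂ : List Bool) :
    ham (X₁ ++ X₂) (Y₁ ++ Y₂) = ham X₁ Y₁ + ham X₂ Y₂ := by
  rw [ham_eq_ham_take_add_ham_drop _ _ X₁.length]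
  simp [h]

theorem ham_rotate {X Y : List Bool} (h : X.length = Y.length) (n : ℕ) :
    ham (X.rotate n) (Y.rotate n) = ham X Y := by
  rw [List.rotate_eq_drop_append_take_mod, List.rotate_eq_drop_append_take_mod, ← h,
    ham_append (by simp [h]), add_comm, ← ham_eq_ham_take_add_ham_drop]

theorem ham_replicate_true (Z : List Bool) (n : ℕ) :
    ham Z (List.replicate n true) = (Z.take n).count false := by
  induction n generalizing Z with
  | zero => cases Z <;> simp [ham]
  | succ n ih =>
    cases Z with
    | nil => simp [ham]
    | cons z Z => cases z <;> simp [ham, List.replicate_succ, ih]; omega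

theorem count_false_take_le_ham (X G : List Bool) (n : ℕ) :
    (X.take n).count false ≤ ham X (List.replicate n true ++ G) := by
  rw [ham_eq_ham_take_add_ham_drop _ _ n, List.take_left' (by simp), ham_replicate_true,
    List.take_take, min_self]
  omega

section SparseWord

variable {m : ℕ} {F : List Bool}

theorem min_le_count_false_take_drop_add_three
    (hwin : ∀ i j, j ≤ 2 * m → ((F.drop i).take j).count true ≤ 3) {i j : ℕ} (hj : j ≤ 2 * m) :
    min j (F.length - i) ≤ ((F.drop i).take j).count false + 3 := by
  have := List.count_false_add_count_true ((F.drop i).take j)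
  have := hwin i j hj
  simp only [List.length_take, List.length_drop] at *
  omega

theorem count_false_take_drop_of_add_le (hpre : true ∉ F.take m) {i j : ℕ} (h : i + j ≤ m) :
    ((F.drop i).take j).count false = min j (F.length - i) := by
  have hsub : (F.drop i).take j = ((F.take m).drop i).take j := by
    rw [List.drop_take, List.take_take, min_eq_left (by omega)]
  have hzero : ((F.drop i).take j).count true = 0 := by
    rw [hsub, List.count_eq_zero]
    exact fun hmem => hpre (List.mem_of_mem_drop (List.mem_of_mem_take hmem))
  have := List.count_false_add_count_true ((F.drop i).take j)
  simp only [List.length_take, List.length_drop] at *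
  omega

theorem sub_three_le_count_false_take_drop
    (hwin : ∀ i j, j ≤ 2 * m → ((F.drop i).take j).count true ≤ 3) (hpre : true ∉ F.take m)
    {i : ℕ} (hi : i + 2 * m ≤ (F ++ List.replicate m true ++ F).length) :
    m - 3 ≤ (((F ++ List.replicate m true ++ F).drop i).take (2 * m)).count false := by
  simp only [List.count_take_drop_append, List.length_append, List.length_replicate,
    List.drop_replicate, List.take_replicate, List.count_replicate, beq_false, Bool.not_true,
    Bool.false_eq_true, ↓reduceIte, add_zero] at hi ⊢
  have h₁ := min_le_count_false_take_drop_add_three hwin (i := i) (j := 2 * m) le_rfl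
  have h₂ := min_le_count_false_take_drop_add_three hwin (i := i - (F.length + m))
    (j := 2 * m - (F.length + m - i)) (by omega)
  have h₃ := fun h => count_false_take_drop_of_add_le hpre (i := i - (F.length + m))
    (j := 2 * m - (F.length + m - i)) h
  omega

theorem sub_three_le_count_false_take_drop_add (hm : 3 ≤ m)
    (hwin : ∀ i j, j ≤ 2 * m → ((F.drop i).take j).count true ≤ 3) {d a b : ℕ}
    (hab : a + b = 2 * m) (hd : d + F.length + 2 * m ≤ (F ++ List.replicate m true ++ F).length) :
    m - 3 ≤ (((F ++ List.replicate m true ++ F).drop d).take a).count false +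
      (((F ++ List.replicate m true ++ F).drop (d + F.length + 2 * m - b)).take b).count false := by
  simp only [List.count_take_drop_append, List.length_append, List.length_replicate,
    List.drop_replicate, List.take_replicate, List.count_replicate, beq_false, Bool.not_true,
    Bool.false_eq_true, ↓reduceIte, add_zero] at hd ⊢
  have h₁ := min_le_count_false_take_drop_add_three hwin (i := d) (j := a) (by omega)
  have h₂ := min_le_count_false_take_drop_add_three hwin (i := d + F.length + 2 * m - b) (j := b)
    (by omega)
  have h₃ := min_le_count_false_take_drop_add_three hwin
    (i := d + F.length + 2 * m - b - (F.length + m))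
    (j := b - (F.length + m - (d + F.length + 2 * m - b))) (by omega)
  omega

theorem sub_three_le_count_false_take_rotate (hm : 3 ≤ m)
    (hwin : ∀ i j, j ≤ 2 * m → ((F.drop i).take j).count true ≤ 3) (hpre : true ∉ F.take m)
    {X : List Bool} (hX : X <:+: F ++ List.replicate m true ++ F)
    (hlen : X.length = F.length + 2 * m) (r : ℕ) :
    m - 3 ≤ ((X.rotate r).take (2 * m)).count false := by
  obtain ⟨d, hd, hXeq⟩ := hX.exists_eq_take_drop
  have hW : (F ++ List.replicate m true ++ F).length = 2 * F.length + m := by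
    simp only [List.length_append, List.length_replicate]; omega
  have hwindow : ∀ i j, i + j ≤ X.length →
      (X.drop i).take j = ((F ++ List.replicate m true ++ F).drop (d + i)).take j := by
    intro i j hij
    rw [hXeq, List.drop_take, List.take_take, List.drop_drop, min_eq_left (by omega)]
  rw [← List.rotate_mod]
  set s := r % X.length
  have hs : s < X.length := Nat.mod_lt _ (by omega)
  rw [List.rotate_eq_drop_append_take hs.le]
  by_cases hfit : s + 2 * m ≤ X.length
  · rw [List.take_append_of_le_length (by rw [List.length_drop]; omega), hwindow _ _ hfit]
    exact sub_three_le_count_false_take_drop hwin hpre (by omega)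
  · have hshort : (X.drop s).length ≤ 2 * m := by rw [List.length_drop]; omega
    have hsplit : ((X.drop s ++ X.take s).take (2 * m)).count false =
        ((X.drop s).take (X.length - s)).count false +
          ((X.drop 0).take (2 * m - (X.length - s))).count false := by
      rw [List.take_append, List.count_append, List.take_of_length_le hshort, List.length_drop,
        List.take_take, min_eq_left (by omega), List.drop_zero,
        List.take_of_length_le (l := X.drop _) (by simp)]
    rw [hsplit, hwindow _ _ (by omega), hwindow _ _ (by omega), Nat.add_zero]
    have := sub_three_le_count_false_take_drop_add hm hwin
      (d := d) (a := 2 * m - (X.length - s)) (b := X.length - s) (by omega) (by omega)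
    rw [show d + F.length + 2 * m - (X.length - s) = d + s by omega] at this
    omega

end SparseWord

def phiBlock (k : ℕ) (x : Bool) : List Bool :=
  List.replicate (2 * k + 4) false ++ [true, false, true, x] ++ List.replicate (2 * k + 4) false

theorem phi_cons (k : ℕ) (x : Bool) (S : List Bool) :
    phi k (x :: S) = phiBlock k x ++ phi k S := rfl

theorem length_phiBlock (k : ℕ) (x : Bool) : (phiBlock k x).length = 4 * k + 12 := by
  simp only [phiBlock, List.length_append, List.length_replicate, List.length_cons,
    List.length_nil]
  omega

theorem length_phi (k : ℕ) (S : List Bool) : (phi k S).length = (4 * k + 12) * S.length := by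
  induction S with
  | nil => rfl
  | cons x S ih => rw [phi_cons, List.length_append, length_phiBlock, ih, List.length_cons]; ring

theorem count_true_take_drop_phiBlock_le (k : ℕ) (x : Bool) (i j : ℕ) :
    (((phiBlock k x).drop i).take j).count true ≤ 3 := by
  calc _ ≤ (phiBlock k x).count true :=
        ((List.take_sublist _ _).trans (List.drop_sublist _ _)).count_le true
    _ ≤ 3 := by cases x <;> simp [phiBlock, List.count_replicate]

theorem true_not_mem_drop_phiBlock (k : ℕ) (x : Bool) {i : ℕ} (hi : 2 * k + 8 ≤ i) :
    true ∉ (phiBlock k x).drop i := by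
  have htail : (phiBlock k x).drop (2 * k + 8) = List.replicate (2 * k + 4) false :=
    List.drop_left' (by simp)
  rw [show i = 2 * k + 8 + (i - (2 * k + 8)) by omega, ← List.drop_drop, htail]
  exact fun h => by simpa using List.mem_of_mem_drop h

theorem true_not_mem_take_phiBlock (k : ℕ) (x : Bool) {j : ℕ} (hj : j ≤ 2 * k + 4) :
    true ∉ (phiBlock k x).take j := by
  rw [phiBlock, List.append_assoc, List.take_append_of_le_length (by simpa using hj)]
  exact fun h => by simpa using List.mem_of_mem_take h

theorem true_not_mem_take_phi (k : ℕ) (S : List Bool) {j : ℕ} (hj : j ≤ 2 * k + 4) :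
    true ∉ (phi k S).take j := by
  cases S with
  | nil => simp [phi]
  | cons x S =>
    rw [phi_cons, List.take_append_of_le_length (by rw [length_phiBlock]; omega)]
    exact true_not_mem_take_phiBlock k x hj

theorem count_true_take_phi_le (k : ℕ) (S : List Bool) {j : ℕ} (hj : j ≤ 4 * k + 12) :
    ((phi k S).take j).count true ≤ 3 := by
  cases S with
  | nil => simp [phi]
  | cons x S =>
    rw [phi_cons, List.take_append_of_le_length (by rw [length_phiBlock]; omega)]
    simpa using count_true_take_drop_phiBlock_le k x 0 j

theorem count_true_take_drop_phi_le (k : ℕ) (S : List Bool) :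
    ∀ i j, j ≤ 2 * (2 * k + 4) → (((phi k S).drop i).take j).count true ≤ 3 := by
  induction S with
  | nil => simp [phi]
  | cons x S ih =>
    intro i j hj
    rw [phi_cons, List.count_take_drop_append, length_phiBlock]
    by_cases hi : 4 * k + 12 ≤ i
    · rw [List.drop_eq_nil_of_le (by rw [length_phiBlock]; omega)]
      simpa [show 4 * k + 12 - i = 0 by omega] using ih (i - (4 * k + 12)) j hj
    rw [show i - (4 * k + 12) = 0 by omega, List.drop_zero]
    by_cases hpre : j - (4 * k + 12 - i) ≤ 2 * k + 4
    · rw [List.count_eq_zero_of_not_mem (true_not_mem_take_phi k S hpre), add_zero]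
      exact count_true_take_drop_phiBlock_le k x i j
    · rw [List.count_eq_zero_of_not_mem fun h => true_not_mem_drop_phiBlock k x (i := i) (by omega)
          (List.mem_of_mem_take h), zero_add]
      exact count_true_take_phi_le k S (by omega)

theorem stmt8_general (k ℓ : ℕ)
    (S1 Sm : List Bool) (h1 : S1.length = ℓ) (hm : Sm.length = ℓ)
    (c : ℕ) (hc : c = (4 * k + 12) * ℓ + 4 * k + 8)
    (X Y : List Bool)
    (hX : X <:+: (phi k S1 ++ List.replicate (2 * k + 4) true ++ phi k S1))
    (hXlen : X.length = c)
    (hY : Y <:+: ((gamma k Sm ++ List.replicate (2 * k + 4) true) ++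
      (gamma k Sm ++ List.replicate (2 * k + 4) true)))
    (hYlen : Y.length = c) :
    2 * k + 1 ≤ ham X Y := by
  have hlen : X.length = (phi k S1).length + 2 * (2 * k + 4) := by
    rw [hXlen, hc, length_phi, h1]; ring
  have hYrot : Y ~r List.replicate (2 * (2 * k + 4)) true ++ phi k Sm := by
    unfold gamma at hY
    refine List.isRotated_replicate_append_of_infix true hY ?_
    rw [hYlen, hc, length_phi, hm]; ring
  obtain ⟨n, -, hn⟩ := List.isRotated_iff_mod.mp hYrot
  calc 2 * k + 1 = (2 * k + 4) - 3 := by omega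
    _ ≤ ((X.rotate n).take (2 * (2 * k + 4))).count false :=
      sub_three_le_count_false_take_rotate (by omega) (count_true_take_drop_phi_le k S1)
        (true_not_mem_take_phi k S1 le_rfl) hX hlen n
    _ ≤ ham (X.rotate n) (Y.rotate n) := hn ▸ count_false_take_le_ham _ _ _
    _ = ham X Y := ham_rotate (by omega) n

theorem stmt8 (k ℓ : ℕ) (hℓ : 1 ≤ ℓ)
    (S1 Sm : List Bool) (h1 : S1.length = ℓ) (hm : Sm.length = ℓ)
    (c : ℕ) (hc : c = (4 * k + 12) * ℓ + 4 * k + 8)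
    (X Y : List Bool)
    (hX : X <:+: (phi k S1 ++ List.replicate (2 * k + 4) true ++ phi k S1))
    (hXlen : X.length = c)
    (hY : Y <:+: ((gamma k Sm ++ List.replicate (2 * k + 4) true) ++
      (gamma k Sm ++ List.replicate (2 * k + 4) true)))
    (hYlen : Y.length = c) :
    2 * k + 1 ≤ ham X Y :=
  stmt8_general k ℓ S1 Sm h1 hm c hc X Y hX hXlen hY hYlen
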